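/- arXiv:1206.5436 — 2 statements merged into one kernel-verified Lean document; each statement's English description precedes it below -/
import Mathlib

section
/- In a finite semimodular lattice, if two distinct covering squares (cover-preserving sublattices isomorphic to C2 × C2) have the same bottom element, then the lattice is not slim. Equivalently: in a slim semimodular lattice, no two distinct covering squares share the same bottom element. -/
/-!
Two distinct covering squares with the same bottom `o` provide three distinct covers `x, y, z`
of `o`. Any two distinct covers of `o` meet in `o`, so join-irreducibles `p ≤ x`, `q ≤ y`,
`r ≤ z` chosen outside the ideal `↓o` are pairwise incomparable.
-/

/-- A covering square `{o, a, b, i}` of a lattice. -/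
def IsCoveringSquare {L : Type*} [Lattice L] (o a b i : L) : Prop :=
  o ⋖ a ∧ o ⋖ b ∧ a ⋖ i ∧ b ⋖ i ∧ a ≠ b ∧ a ⊓ b = o ∧ a ⊔ b = i

theorem exists_supIrred_le_not_le {L : Type*} [Lattice L] [WellFoundedLT L] {o : L} :
    ∀ {x : L}, ¬ x ≤ o → ∃ p : L, SupIrred p ∧ p ≤ x ∧ ¬ p ≤ o := by
  intro x
  induction x using WellFoundedLT.induction with
  | ind x ih =>
    intro hxo
    by_cases hx : SupIrred x
    · exact ⟨x, hx, le_rfl, hxo⟩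
    obtain hmin | ⟨y, z, rfl, hy, hz⟩ := not_supIrred.1 hx
    · exact absurd ((hmin inf_le_left).trans inf_le_right) hxo
    by_cases hyo : y ≤ o
    · have hzo : ¬ z ≤ o := fun hzo => hxo (sup_le hyo hzo)
      obtain ⟨p, hp, hpz, hpo⟩ := ih z hz hzo
      exact ⟨p, hp, hpz.trans le_sup_right, hpo⟩
    · obtain ⟨p, hp, hpy, hpo⟩ := ih y hy hyo
      exact ⟨p, hp, hpy.trans le_sup_left, hpo⟩

theorem not_le_of_covBy_of_covBy {L : Type*} [Lattice L] {o x y p q : L}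
    (hx : o ⋖ x) (hy : o ⋖ y) (hxy : x ≠ y) (hpx : p ≤ x) (hqy : q ≤ y) (hpo : ¬ p ≤ o) :
    ¬ p ≤ q := fun hpq =>
  hpo <| WCovBy.inf_eq hx.wcovBy hy.wcovBy hxy ▸ le_inf hpx (hpq.trans hqy)

theorem exists_supIrred_antichain_of_covBy {L : Type*} [Lattice L] [WellFoundedLT L]
    {o x y z : L} (hx : o ⋖ x) (hy : o ⋖ y) (hz : o ⋖ z)
    (hxy : x ≠ y) (hxz : x ≠ z) (hyz : y ≠ z) :
    ∃ p q r : L, SupIrred p ∧ SupIrred q ∧ SupIrred r ∧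
      ¬ p ≤ q ∧ ¬ q ≤ p ∧ ¬ p ≤ r ∧ ¬ r ≤ p ∧ ¬ q ≤ r ∧ ¬ r ≤ q := by
  obtain ⟨p, hp, hpx, hpo⟩ := exists_supIrred_le_not_le hx.lt.not_ge
  obtain ⟨q, hq, hqy, hqo⟩ := exists_supIrred_le_not_le hy.lt.not_ge
  obtain ⟨r, hr, hrz, hro⟩ := exists_supIrred_le_not_le hz.lt.not_ge
  exact ⟨p, q, r, hp, hq, hr,
    not_le_of_covBy_of_covBy hx hy hxy hpx hqy hpo,
    not_le_of_covBy_of_covBy hy hx hxy.symm hqy hpx hqo,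
    not_le_of_covBy_of_covBy hx hz hxz hpx hrz hpo,
    not_le_of_covBy_of_covBy hz hx hxz.symm hrz hpx hro,
    not_le_of_covBy_of_covBy hy hz hyz hqy hrz hqo,
    not_le_of_covBy_of_covBy hz hy hyz.symm hrz hqy hro⟩

theorem IsCoveringSquare.exists_covBy_ne_ne {L : Type*} [Lattice L] {o a b i a' b' i' : L}
    (h₁ : IsCoveringSquare o a b i) (h₂ : IsCoveringSquare o a' b' i')
    (hdiff : ({o, a, b, i} : Set L) ≠ {o, a', b', i'}) :
    ∃ c, o ⋖ c ∧ c ≠ a ∧ c ≠ b := by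
  obtain ⟨-, -, -, -, -, -, rfl⟩ := h₁
  obtain ⟨ha', hb', -, -, hab', -, rfl⟩ := h₂
  by_contra! h
  apply hdiff
  rcases eq_or_ne a' a with rfl | ha'a
  · rw [h b' hb' (Ne.symm hab')]
  obtain rfl := h a' ha' ha'a
  rcases eq_or_ne b' a with rfl | hb'a
  · rw [sup_comm, Set.insert_comm b' a']
  · exact absurd (h b' hb' hb'a).symm hab'

theorem stmt_5_general {L : Type*} [Lattice L] [Fintype L]
    (o a b i a' b' i' : L)
    (h₁ : IsCoveringSquare o a b i) (h₂ : IsCoveringSquare o a' b' i')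
    (hdiff : ({o, a, b, i} : Set L) ≠ {o, a', b', i'}) :
    ∃ p q r : L, SupIrred p ∧ SupIrred q ∧ SupIrred r ∧
      ¬ p ≤ q ∧ ¬ q ≤ p ∧ ¬ p ≤ r ∧ ¬ r ≤ p ∧ ¬ q ≤ r ∧ ¬ r ≤ q := by
  obtain ⟨c, hc, hca, hcb⟩ := h₁.exists_covBy_ne_ne h₂ hdiff
  obtain ⟨hoa, hob, -, -, hab, -⟩ := h₁
  exact exists_supIrred_antichain_of_covBy hoa hob hc hab hca.symm hcb.symm

/-- In a finite semimodular lattice, if two distinct covering squares have the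
same bottom element, then the lattice is not slim. -/
theorem stmt_5 {L : Type*} [Lattice L] [Fintype L]
    (semimod : ∀ a b : L, a ⊓ b ⋖ a → b ⋖ a ⊔ b)
    (o a b i a' b' i' : L)
    (h₁ : IsCoveringSquare o a b i) (h₂ : IsCoveringSquare o a' b' i')
    (hdiff : ({o, a, b, i} : Set L) ≠ {o, a', b', i'}) :
    ∃ p q r : L, SupIrred p ∧ SupIrred q ∧ SupIrred r ∧
      ¬ p ≤ q ∧ ¬ q ≤ p ∧ ¬ p ≤ r ∧ ¬ r ≤ p ∧ ¬ q ≤ r ∧ ¬ r ≤ q :=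
  stmt_5_general o a b i a' b' i' h₁ h₂ hdiff
end

section
/- Every finite distributive lattice whose join-irreducible elements form the union of two chains embeds as a cover-preserving sublattice into a product of two finite chains (a grid). -/
/-!
Let `J` be the set of join-irreducibles of `D`, split into two disjoint chains `C₁` and `C₂`.
Send `x` to the pair of numbers `(#(C₁ ∩ ↓x), #(C₂ ∩ ↓x))`. Since join-irreducibles are join-prime
in a distributive lattice, `C ∩ ↓(x ⊔ y) = (C ∩ ↓x) ∪ (C ∩ ↓y)`, and the sets `C ∩ ↓x` are nested
when `C` is a chain, so each coordinate turns joins and meets into `max` and `min`. The map is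
injective because every element is the join of the join-irreducibles below it, and it preserves
covers because `x ⋖ y` adds exactly one join-irreducible below `y`, which lies in exactly one of
the two chains.
-/

open Set

section

variable {α : Type*}

theorem IsChain.inter_Iic_subset_or_subset [Preorder α] {C : Set α}
    (hC : IsChain (· ≤ ·) C) (x y : α) : C ∩ Iic x ⊆ C ∩ Iic y ∨ C ∩ Iic y ⊆ C ∩ Iic x := by
  rw [or_iff_not_imp_left, not_subset]
  rintro ⟨a, ⟨haC, hax⟩, hay⟩ b ⟨hbC, hby⟩
  refine ⟨hbC, ?_⟩
  rcases hC.total haC hbC with hab | hba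
  · exact absurd ⟨haC, hab.trans hby⟩ hay
  · exact hba.trans hax

theorem inter_Iic_sup_eq_union [SemilatticeSup α] {C : Set α} (hC : ∀ a ∈ C, SupPrime a)
    (x y : α) : C ∩ Iic (x ⊔ y) = C ∩ Iic x ∪ C ∩ Iic y := by
  ext a
  simp only [mem_inter_iff, mem_Iic, mem_union]
  constructor
  · rintro ⟨haC, hle⟩
    exact ((hC a haC).le_sup.1 hle).imp (⟨haC, ·⟩) (⟨haC, ·⟩)
  · rintro (⟨haC, hle⟩ | ⟨haC, hle⟩)
    exacts [⟨haC, le_sup_of_le_left hle⟩, ⟨haC, le_sup_of_le_right hle⟩]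

theorem le_of_forall_supIrred_le [Lattice α] [WellFoundedLT α] {x y : α}
    (h : ∀ a, SupIrred a → a ≤ x → a ≤ y) : x ≤ y := by
  induction x using WellFoundedLT.induction with
  | _ x ih =>
    by_cases hx : SupIrred x
    · exact h x hx le_rfl
    rcases not_supIrred.1 hx with hmin | ⟨b, c, rfl, hb, hc⟩
    · exact (hmin (inf_le_left (b := y))).trans inf_le_right
    · exact sup_le (ih b hb fun a ha hab => h a ha (le_sup_of_le_left hab))
        (ih c hc fun a ha hac => h a ha (le_sup_of_le_right hac))

theorem eq_of_supIrred_inter_Iic_eq [Lattice α] [WellFoundedLT α] {x y : α}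
    (h : {a | SupIrred a} ∩ Iic x = {a | SupIrred a} ∩ Iic y) : x = y := by
  have key : ∀ {u v : α}, {a | SupIrred a} ∩ Iic u ⊆ {a | SupIrred a} ∩ Iic v → u ≤ v :=
    fun huv => le_of_forall_supIrred_le fun a ha hau => (huv ⟨ha, hau⟩).2
  exact le_antisymm (key h.subset) (key h.superset)

theorem CovBy.exists_supIrred_inter_Iic_eq_insert [DistribLattice α] [WellFoundedLT α]
    {x y : α} (hxy : x ⋖ y) : ∃ a, SupIrred a ∧ ¬a ≤ x ∧
      {b | SupIrred b} ∩ Iic y = insert a ({b | SupIrred b} ∩ Iic x) := by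
  obtain ⟨a, ha, hay, hax⟩ : ∃ a, SupIrred a ∧ a ≤ y ∧ ¬a ≤ x := by
    by_contra! h
    exact hxy.lt.not_ge (le_of_forall_supIrred_le h)
  have sup_eq : ∀ b, b ≤ y → ¬b ≤ x → x ⊔ b = y := fun b hby hbx =>
    (hxy.eq_or_eq le_sup_left (sup_le hxy.le hby)).resolve_left
      fun h => hbx (h ▸ le_sup_right)
  refine ⟨a, ha, hax, ?_⟩
  ext b
  simp only [mem_inter_iff, mem_ofPred_eq, mem_Iic, mem_insert_iff]
  constructor
  · rintro ⟨hb, hby⟩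
    by_cases hbx : b ≤ x
    · exact Or.inr ⟨hb, hbx⟩
    refine Or.inl (le_antisymm ?_ ?_)
    · exact (hb.supPrime.le_sup.1 (sup_eq a hay hax ▸ hby)).resolve_left hbx
    · exact (ha.supPrime.le_sup.1 (sup_eq b hby hbx ▸ hay)).resolve_left hax
  · rintro (rfl | ⟨hb, hbx⟩)
    exacts [⟨ha, hay⟩, ⟨hb, hbx.trans hxy.le⟩]

theorem inter_Iic_eq_inter_inter_Iic [Preorder α] {C J : Set α} (hCJ : C ⊆ J) (x : α) :
    C ∩ Iic x = C ∩ (J ∩ Iic x) := by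
  rw [← inter_assoc, inter_eq_left.2 hCJ]

section ChainRank

variable [Preorder α] [Finite α] {C J : Set α} {a x y : α}

noncomputable def chainRank (C : Set α) (x : α) : Fin (Nat.card α + 1) :=
  ⟨(C ∩ Iic x).ncard, Nat.lt_succ_of_le (ncard_le_card _)⟩

theorem chainRank_le_chainRank (h : C ∩ Iic x ⊆ C ∩ Iic y) : chainRank C x ≤ chainRank C y :=
  Fin.le_def.2 (ncard_le_ncard h)

theorem chainRank_congr (h : C ∩ Iic x = C ∩ Iic y) : chainRank C x = chainRank C y :=
  Fin.ext (congrArg ncard h)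

theorem IsChain.inter_Iic_eq_of_chainRank_eq (hC : IsChain (· ≤ ·) C)
    (h : chainRank C x = chainRank C y) : C ∩ Iic x = C ∩ Iic y := by
  have hcard : (C ∩ Iic x).ncard = (C ∩ Iic y).ncard := Fin.val_eq_of_eq h
  rcases hC.inter_Iic_subset_or_subset x y with hxy | hyx
  · exact eq_of_subset_of_ncard_le hxy hcard.ge
  · exact (eq_of_subset_of_ncard_le hyx hcard.le).symm

theorem chainRank_covBy_of_mem (hCJ : C ⊆ J) (hJ : J ∩ Iic y = insert a (J ∩ Iic x))
    (hax : ¬a ≤ x) (haC : a ∈ C) : chainRank C x ⋖ chainRank C y := by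
  have hy : C ∩ Iic y = insert a (C ∩ Iic x) := by
    rw [inter_Iic_eq_inter_inter_Iic hCJ, hJ, inter_insert_of_mem haC,
      ← inter_Iic_eq_inter_inter_Iic hCJ]
  rw [Fin.covBy_iff, Nat.covBy_iff_add_one_eq]
  exact (ncard_insert_of_notMem fun h => hax h.2).symm.trans (congrArg ncard hy.symm)

theorem chainRank_eq_of_notMem (hCJ : C ⊆ J) (hJ : J ∩ Iic y = insert a (J ∩ Iic x))
    (haC : a ∉ C) : chainRank C y = chainRank C x := by
  apply chainRank_congr
  rw [inter_Iic_eq_inter_inter_Iic hCJ, hJ, inter_insert_of_notMem haC,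
    ← inter_Iic_eq_inter_inter_Iic hCJ]

end ChainRank

section ChainRankLattice

variable [Lattice α] [Finite α] {C : Set α}

theorem chainRank_sup (hC : IsChain (· ≤ ·) C) (hprime : ∀ a ∈ C, SupPrime a) (x y : α) :
    chainRank C (x ⊔ y) = chainRank C x ⊔ chainRank C y := by
  rcases hC.inter_Iic_subset_or_subset x y with h | h
  · rw [sup_eq_right.2 (chainRank_le_chainRank h)]
    exact chainRank_congr ((inter_Iic_sup_eq_union hprime x y).trans (union_eq_right.2 h))
  · rw [sup_eq_left.2 (chainRank_le_chainRank h)]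
    exact chainRank_congr ((inter_Iic_sup_eq_union hprime x y).trans (union_eq_left.2 h))

theorem chainRank_inf (hC : IsChain (· ≤ ·) C) (x y : α) :
    chainRank C (x ⊓ y) = chainRank C x ⊓ chainRank C y := by
  have hinf : C ∩ Iic (x ⊓ y) = C ∩ Iic x ∩ (C ∩ Iic y) := by
    rw [← Iic_inter_Iic, inter_inter_distrib_left]
  rcases hC.inter_Iic_subset_or_subset x y with h | h
  · rw [inf_eq_left.2 (chainRank_le_chainRank h)]
    exact chainRank_congr (hinf.trans (inter_eq_left.2 h))
  · rw [inf_eq_right.2 (chainRank_le_chainRank h)]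
    exact chainRank_congr (hinf.trans (inter_eq_right.2 h))

end ChainRankLattice

end

/-- Every finite distributive lattice whose join-irreducible elements form the
union of two chains embeds as a cover-preserving sublattice into a grid, i.e.,
a product of two finite chains. -/
theorem stmt_14 {D : Type*} [DistribLattice D] [Fintype D]
    (hJi : ∃ C₁ C₂ : Set D, IsChain (· ≤ ·) C₁ ∧ IsChain (· ≤ ·) C₂ ∧
      {a : D | SupIrred a} = C₁ ∪ C₂) :
    ∃ (m n : ℕ) (f : D → Fin m × Fin n), Function.Injective f ∧
      (∀ x y : D, f (x ⊔ y) = f x ⊔ f y) ∧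
      (∀ x y : D, f (x ⊓ y) = f x ⊓ f y) ∧
      (∀ x y : D, x ⋖ y → f x ⋖ f y) := by
  obtain ⟨C₁, C₂, hC₁, hC₂, hJ⟩ := hJi
  replace hJ : {a : D | SupIrred a} = C₁ ∪ C₂ \ C₁ := by rw [hJ, union_sdiff_self]
  have hK₂ : IsChain (· ≤ ·) (C₂ \ C₁) := hC₂.mono sdiff_subset
  have hC₁J : C₁ ⊆ {a | SupIrred a} := hJ ▸ subset_union_left
  have hK₂J : C₂ \ C₁ ⊆ {a | SupIrred a} := hJ ▸ subset_union_right
  refine ⟨_, _, fun x => (chainRank C₁ x, chainRank (C₂ \ C₁) x), fun x y hxy => ?_,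
    fun x y => Prod.ext (chainRank_sup hC₁ (fun a ha => (hC₁J ha).supPrime) x y)
      (chainRank_sup hK₂ (fun a ha => (hK₂J ha).supPrime) x y),
    fun x y => Prod.ext (chainRank_inf hC₁ x y) (chainRank_inf hK₂ x y), fun x y hxy => ?_⟩
  · obtain ⟨h₁, h₂⟩ := Prod.mk.inj hxy
    apply eq_of_supIrred_inter_Iic_eq
    rw [hJ, union_inter_distrib_right, union_inter_distrib_right,
      hC₁.inter_Iic_eq_of_chainRank_eq h₁, hK₂.inter_Iic_eq_of_chainRank_eq h₂]
  · obtain ⟨a, ha, hax, hy⟩ := hxy.exists_supIrred_inter_Iic_eq_insert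
    show (chainRank C₁ x, chainRank (C₂ \ C₁) x) ⋖ (chainRank C₁ y, chainRank (C₂ \ C₁) y)
    rcases (hJ ▸ ha : a ∈ C₁ ∪ C₂ \ C₁) with haC₁ | haK₂
    · rw [chainRank_eq_of_notMem hK₂J hy fun h => h.2 haC₁]
      exact Prod.mk_covBy_mk_iff_left.2 (chainRank_covBy_of_mem hC₁J hy hax haC₁)
    · rw [chainRank_eq_of_notMem hC₁J hy haK₂.2]
      exact Prod.mk_covBy_mk_iff_right.2 (chainRank_covBy_of_mem hK₂J hy hax haK₂)
end
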